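/- arXiv:1904.07534 — 2 statements merged into one kernel-verified Lean document; each statement's English description precedes it below -/
import Mathlib

section
/- There is no internal category structure on the naive separated product of nF with itself: there do not exist a composition operation comp on the set of pairs ((f,g),(f',g')) with f,g having disjoint domains and codomains, f',g' having disjoint domains and codomains, and cod(f)=dom(f'), cod(g)=dom(g'), such that comp lands in nF₁ ∗ nF₁ and satisfies dom(comp) = (dom f, dom g) and cod(comp) = (cod f', cod g'). Concretely: for distinct names a,b,c,d, the pair ((δ_{ac}, δ_{bd}), (δ_{cb}, δ_{da})) is composable componentwise, but the componentwise composites (δ_{ab}, δ_{ba}) do not have disjoint supports, hence do not lie in nF₁ ∗ nF₁. -/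
/-- The set of names. -/
abbrev Name := ℕ

/-- A set with an action of the group of (finite) permutations of names. -/
structure PermSet where
  α : Type
  act : Equiv.Perm Name → α → α
  act_one : ∀ x, act 1 x = x
  act_mul : ∀ π σ x, act (π * σ) x = act π (act σ x)

/-- `S` supports `x`. -/
def PermSet.IsSupp (X : PermSet) (S : Set Name) (x : X.α) : Prop :=
  ∀ π : Equiv.Perm Name, (∀ a ∈ S, π a = a) → X.act π x = x

/-- `x` is finitely supported. -/
def PermSet.FinSupp (X : PermSet) (x : X.α) : Prop :=
  ∃ S : Finset Name, X.IsSupp ↑S x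

/-- A nominal set: every element is finitely supported. -/
def PermSet.Nominal (X : PermSet) : Prop := ∀ x, X.FinSupp x

/-- The least support of `x` (intersection of all finite supports). -/
def PermSet.supp (X : PermSet) (x : X.α) : Set Name :=
  ⋂₀ {S : Set Name | S.Finite ∧ X.IsSupp S x}


/-- A morphism of the category `nF`: a function `f : A → B` between finite subsets of `𝒩`,
represented by a total function that is the identity outside `A`. -/
structure nFMor where
  dom : Finset Name
  cod : Finset Name
  f : Name → Name
  maps : ∀ a ∈ dom, f a ∈ cod
  ext0 : ∀ a ∉ dom, f a = a

theorem nFMor.ext2 {m n : nFMor} (h1 : m.dom = n.dom) (h2 : m.cod = n.cod)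
    (h3 : m.f = n.f) : m = n := by
  cases m; cases n; simp_all

/-- The nominal set of objects of `nF`: finite subsets of `𝒩` with `π·A = π[A]`. -/
def objPS : PermSet where
  α := Finset Name
  act π A := A.image π
  act_one A := by simp
  act_mul π σ A := by
    show A.image _ = (A.image _).image _
    rw [Finset.image_image]
    rfl

/-- The nominal set of morphisms of `nF`, with `π·f = π_B ∘ f ∘ (π_A)⁻¹`. -/
def morPS : PermSet where
  α := nFMor
  act π m :=
    { dom := m.dom.image π
      cod := m.cod.image π
      f := π ∘ m.f ∘ π.symm
      maps := by
        intro a ha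
        simp only [Finset.mem_image] at ha ⊢
        obtain ⟨b, hb, rfl⟩ := ha
        exact ⟨m.f b, m.maps b hb, by simp⟩
      ext0 := by
        intro a ha
        have h : π.symm a ∉ m.dom := by
          intro h
          exact ha (Finset.mem_image.mpr ⟨π.symm a, h, by simp⟩)
        simp [m.ext0 _ h] }
  act_one m := by
    apply nFMor.ext2 <;> simp <;> rfl
  act_mul π σ m := by
    apply nFMor.ext2 <;>
      simp [Finset.image_image, Function.comp_def, Equiv.Perm.mul_apply,
        Equiv.Perm.mul_def, Equiv.symm_trans_apply]

/-- Composition in `nF` (in diagrammatic order: first `m`, then `n`). -/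
def nFComp (m n : nFMor) (h : m.cod = n.dom) : nFMor where
  dom := m.dom
  cod := n.cod
  f := fun a => if a ∈ m.dom then n.f (m.f a) else a
  maps := by
    intro a ha
    simp only [if_pos ha]
    exact n.maps _ (h ▸ m.maps a ha)
  ext0 := by intro a ha; simp [ha]

/-- `δ_{x y}`: the unique function `{x} → {y}`. -/
def delta (x y : Name) : nFMor where
  dom := {x}
  cod := {y}
  f := fun a => if a = x then y else a
  maps := by intro a ha; simp_all
  ext0 := by intro a ha; simp_all

/- The least support of a morphism `f : A → B` of `nF` is exactly `A ∪ B`: a permutation fixing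
`A ∪ B` pointwise fixes `f`, while swapping a point of `A ∪ B` with a fresh name moves `A` or `B`.
So `f` and `g` lie in `nF₁ ∗ nF₁` iff `dom f ∪ cod f` and `dom g ∪ cod g` are disjoint, and any pair
with `f : {a} → {b}` and `g : {b} → {a}`, such as the composites `(δ_{ab}, δ_{ba})`, shares `b`. -/

namespace PermSet

variable (X : PermSet)

theorem supp_subset_of_isSupp {S : Set Name} (hS : S.Finite) {x : X.α} (h : X.IsSupp S x) :
    X.supp x ⊆ S :=
  Set.sInter_subset_of_mem ⟨hS, h⟩

theorem mem_supp_of_swap_ne {x : X.α} {y : Name} (T : Finset Name)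
    (h : ∀ e ∉ T, X.act (Equiv.swap y e) x ≠ x) : y ∈ X.supp x := by
  rintro S ⟨hS, hSx⟩
  by_contra hy
  obtain ⟨e, he⟩ := (hS.union T.finite_toSet).infinite_compl.nonempty
  simp only [Set.mem_compl_iff, Set.mem_union, Finset.mem_coe, not_or] at he
  refine h e he.2 (hSx _ fun z hz => Equiv.swap_apply_of_ne_of_ne ?_ ?_)
  · rintro rfl; exact hy hz
  · rintro rfl; exact he.1 hz

end PermSet

namespace nFMor

theorem morPS_act_dom (π : Equiv.Perm Name) (m : nFMor) : (morPS.act π m).dom = m.dom.image π :=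
  rfl

theorem morPS_act_cod (π : Equiv.Perm Name) (m : nFMor) : (morPS.act π m).cod = m.cod.image π :=
  rfl

theorem morPS_act_f (π : Equiv.Perm Name) (m : nFMor) : (morPS.act π m).f = π ∘ m.f ∘ π.symm :=
  rfl

theorem isSupp_dom_union_cod (m : nFMor) : morPS.IsSupp ↑(m.dom ∪ m.cod) m := by
  intro π hπ
  simp only [Finset.coe_union, Set.mem_union, Finset.mem_coe] at hπ
  have image_eq {s : Finset Name} (hs : ∀ z ∈ s, π z = z) : s.image π = s :=
    (Finset.image_congr fun z hz => hs z hz).trans Finset.image_id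
  refine ext2 (image_eq fun z hz => hπ z (.inl hz)) (image_eq fun z hz => hπ z (.inr hz)) ?_
  funext z
  rw [morPS_act_f, Function.comp_apply, Function.comp_apply]
  by_cases hz : z ∈ m.dom
  · rw [π.symm_apply_eq.mpr (hπ z (.inl hz)).symm, hπ _ (.inr (m.maps z hz))]
  · have hz' : π.symm z ∉ m.dom := fun h => by
      rw [← π.apply_symm_apply z, hπ _ (.inl h)] at hz
      exact hz h
    rw [m.ext0 _ hz', m.ext0 _ hz, Equiv.apply_symm_apply]

theorem mem_morPS_supp {m : nFMor} {y : Name} (hy : y ∈ m.dom ∪ m.cod) : y ∈ morPS.supp m := by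
  refine morPS.mem_supp_of_swap_ne (m.dom ∪ m.cod) fun e he hfix => he ?_
  have hdc : (m.dom ∪ m.cod).image (Equiv.swap y e) = m.dom ∪ m.cod := by
    rw [Finset.image_union, ← morPS_act_dom, ← morPS_act_cod, hfix]
  rw [← hdc]
  exact Finset.mem_image.mpr ⟨y, hy, Equiv.swap_apply_left y e⟩

theorem morPS_supp (m : nFMor) : morPS.supp m = ↑(m.dom ∪ m.cod) :=
  (morPS.supp_subset_of_isSupp (Finset.finite_toSet _) m.isSupp_dom_union_cod).antisymm
    fun _ hy => mem_morPS_supp hy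

end nFMor

theorem morPS_supp_delta (x y : Name) : morPS.supp (delta x y) = {x, y} := by
  simp [nFMor.morPS_supp, delta]

theorem morPS_supp_delta_inter_eq_empty {x y z w : Name} (hxz : x ≠ z) (hxw : x ≠ w)
    (hyz : y ≠ z) (hyw : y ≠ w) : morPS.supp (delta x y) ∩ morPS.supp (delta z w) = ∅ := by
  rw [morPS_supp_delta, morPS_supp_delta, Set.eq_empty_iff_forall_notMem]
  rintro u ⟨rfl | rfl, rfl | rfl⟩ <;> simp_all

theorem nFComp_delta_delta (x y z : Name) : nFComp (delta x y) (delta y z) rfl = delta x z := by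
  refine nFMor.ext2 rfl rfl (funext fun u => ?_)
  by_cases hu : u = x <;> simp [nFComp, delta, hu]

theorem morPS_supp_inter_ne_empty_of_mem_cod_of_mem_dom {m n : nFMor} {y : Name} (hm : y ∈ m.cod)
    (hn : y ∈ n.dom) : ¬morPS.supp m ∩ morPS.supp n = ∅ :=
  Set.nonempty_iff_ne_empty.mp
    ⟨y, nFMor.mem_morPS_supp (Finset.mem_union_right _ hm),
      nFMor.mem_morPS_supp (Finset.mem_union_left _ hn)⟩

/-- the naive separated product `nF₁ ∗ nF₁` carries no internal composition:
the pair `((δ_{ac}, δ_{bd}), (δ_{cb}, δ_{da}))` lies componentwise in `nF₁ ∗ nF₁` and is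
componentwise composable, but the componentwise composites `(δ_{ab}, δ_{ba})` do not have
disjoint supports; indeed there is no pair in `nF₁ ∗ nF₁` at all with the required domains
and codomains, so no composition `comp` with `dom (comp) = (dom f, dom g)` and
`cod (comp) = (cod f', cod g')` can land in `nF₁ ∗ nF₁`. -/
theorem stmt9 (a b c d : Name) (hab : a ≠ b) (hac : a ≠ c) (had : a ≠ d)
    (hbc : b ≠ c) (hbd : b ≠ d) (hcd : c ≠ d) :
    morPS.supp (delta a c) ∩ morPS.supp (delta b d) = ∅ ∧
    morPS.supp (delta c b) ∩ morPS.supp (delta d a) = ∅ ∧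
    (delta a c).cod = (delta c b).dom ∧
    (delta b d).cod = (delta d a).dom ∧
    nFComp (delta a c) (delta c b) rfl = delta a b ∧
    nFComp (delta b d) (delta d a) rfl = delta b a ∧
    ¬(morPS.supp (delta a b) ∩ morPS.supp (delta b a) = ∅) ∧
    ¬∃ p : nFMor × nFMor,
        morPS.supp p.1 ∩ morPS.supp p.2 = ∅ ∧
        p.1.dom = {a} ∧ p.1.cod = {b} ∧ p.2.dom = {b} ∧ p.2.cod = {a} := by
  refine ⟨morPS_supp_delta_inter_eq_empty hab had hbc.symm hcd,
    morPS_supp_delta_inter_eq_empty hcd hac.symm hbd hab.symm, rfl, rfl,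
    nFComp_delta_delta a c b, nFComp_delta_delta b d a,
    morPS_supp_inter_ne_empty_of_mem_cod_of_mem_dom (y := b) (by simp [delta])
      (by simp [delta]), ?_⟩
  rintro ⟨p, hdisj, -, hcod, hdom, -⟩
  exact morPS_supp_inter_ne_empty_of_mem_cod_of_mem_dom (y := b) (by simp [hcod]) (by simp [hdom])
    hdisj
end

section
/- In NOM(S), commutativity of ⊎ together with the defining equations implies that naturality of symmetries in S is respected: for t : m → n in a PROP S and any z, [a^m + a^z⟩ (t ⊕ id_z);σ_{n,z} ⟨b^z + b^n] = [a^m + a^z⟩ σ_{m,z};(id_z ⊕ t) ⟨b^z + b^n] holds in NOM(S). -/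
/-- The block-swap permutation of `Fin (m + n)`, exchanging the first `m` with the last `n`. -/
def blockSwap (m n : ℕ) : Equiv.Perm (Fin (m + n)) :=
  (finAddFlip : Fin (m + n) ≃ Fin (n + m)).trans (finCongr (Nat.add_comm n m))

/-- A `PROP` (in the sense of MacLane): a symmetric strict monoidal category with natural
numbers as objects and addition as tensor, presented single-sortedly with total operations
and composability side conditions.  `prm n e` is the symmetry (bijection) arrow induced by a
permutation of `Fin n`; `sym m n := prm (m+n) (blockSwap m n)` is the block symmetry.
Composition `comp` is in diagrammatic order. -/
structure PROP where
  Arr : Type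
  dom : Arr → ℕ
  cod : Arr → ℕ
  id : ℕ → Arr
  comp : Arr → Arr → Arr
  tens : Arr → Arr → Arr
  prm : (n : ℕ) → Equiv.Perm (Fin n) → Arr
  dom_id : ∀ n, dom (id n) = n
  cod_id : ∀ n, cod (id n) = n
  dom_comp : ∀ f g, cod f = dom g → dom (comp f g) = dom f
  cod_comp : ∀ f g, cod f = dom g → cod (comp f g) = cod g
  dom_tens : ∀ f g, dom (tens f g) = dom f + dom g
  cod_tens : ∀ f g, cod (tens f g) = cod f + cod g
  dom_prm : ∀ n e, dom (prm n e) = n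
  cod_prm : ∀ n e, cod (prm n e) = n
  id_comp : ∀ f, comp (id (dom f)) f = f
  comp_id : ∀ f, comp f (id (cod f)) = f
  comp_assoc : ∀ f g h, cod f = dom g → cod g = dom h →
      comp (comp f g) h = comp f (comp g h)
  id_tens_zero : ∀ f, tens (id 0) f = f
  tens_id_zero : ∀ f, tens f (id 0) = f
  tens_assoc : ∀ f g h, tens (tens f g) h = tens f (tens g h)
  tens_id : ∀ m n, tens (id m) (id n) = id (m + n)
  interchange : ∀ f g f' g', cod f = dom g → cod f' = dom g' →
      tens (comp f g) (comp f' g') = comp (tens f f') (tens g g')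
  prm_one : ∀ n, prm n 1 = id n
  prm_mul : ∀ n (e e' : Equiv.Perm (Fin n)), comp (prm n e) (prm n e') = prm n (e' * e)
  prm_natural : ∀ f z, comp (tens f (id z)) (prm (cod f + z) (blockSwap (cod f) z)) =
      comp (prm (dom f + z) (blockSwap (dom f) z)) (tens (id z) f)

/-- The block symmetry `σ_{m,n}` of a `PROP`. -/
def PROP.sym (S : PROP) (m n : ℕ) : S.Arr := S.prm (m + n) (blockSwap m n)

/-- A morphism of `PROP`s: an identity-on-objects strict symmetric monoidal functor. -/
structure PROPMor (S T : PROP) where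
  f : S.Arr → T.Arr
  map_dom : ∀ x, T.dom (f x) = S.dom x
  map_cod : ∀ x, T.cod (f x) = S.cod x
  map_id : ∀ n, f (S.id n) = T.id n
  map_comp : ∀ x y, S.cod x = S.dom y → f (S.comp x y) = T.comp (f x) (f y)
  map_tens : ∀ x y, f (S.tens x y) = T.tens (f x) (f y)
  map_prm : ∀ n e, f (S.prm n e) = T.prm n e

/-- A nominal PROP: a strict monoidal category internal in nominal sets, with finite subsets
of `𝒩` as objects, all renaming bijections `π_A : A → π[A]`, an equivariant structure, and a
partial commutative tensor `⊎` (meaningful on arrows with disjoint domains and disjoint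
codomains).  Composition `comp` is in diagrammatic order. -/
structure NPROP where
  Arr : Type
  dom : Arr → Finset Name
  cod : Arr → Finset Name
  id : Finset Name → Arr
  comp : Arr → Arr → Arr
  tens : Arr → Arr → Arr
  ren : Equiv.Perm Name → Finset Name → Arr
  act : Equiv.Perm Name → Arr → Arr
  dom_id : ∀ A, dom (id A) = A
  cod_id : ∀ A, cod (id A) = A
  dom_comp : ∀ f g, cod f = dom g → dom (comp f g) = dom f
  cod_comp : ∀ f g, cod f = dom g → cod (comp f g) = cod g
  dom_tens : ∀ f g, dom f ∩ dom g = ∅ → cod f ∩ cod g = ∅ →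
      dom (tens f g) = dom f ∪ dom g
  cod_tens : ∀ f g, dom f ∩ dom g = ∅ → cod f ∩ cod g = ∅ →
      cod (tens f g) = cod f ∪ cod g
  dom_ren : ∀ π A, dom (ren π A) = A
  cod_ren : ∀ π A, cod (ren π A) = A.image π
  id_comp : ∀ f, comp (id (dom f)) f = f
  comp_id : ∀ f, comp f (id (cod f)) = f
  comp_assoc : ∀ f g h, cod f = dom g → cod g = dom h →
      comp (comp f g) h = comp f (comp g h)
  id_tens_empty : ∀ f, tens (id ∅) f = f
  tens_id_empty : ∀ f, tens f (id ∅) = f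
  tens_assoc : ∀ f g h, tens (tens f g) h = tens f (tens g h)
  tens_comm : ∀ f g, dom f ∩ dom g = ∅ → cod f ∩ cod g = ∅ → tens f g = tens g f
  tens_id : ∀ A B, A ∩ B = ∅ → tens (id A) (id B) = id (A ∪ B)
  interchange : ∀ f g f' g', cod f = dom g → cod f' = dom g' →
      dom f ∩ dom f' = ∅ → cod f ∩ cod f' = ∅ → cod g ∩ cod g' = ∅ →
      tens (comp f g) (comp f' g') = comp (tens f f') (tens g g')
  ren_one : ∀ A, ren 1 A = id A
  ren_ren : ∀ π σ A, comp (ren π A) (ren σ (A.image π)) = ren (σ * π) A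
  ren_tens : ∀ π A B, A ∩ B = ∅ → tens (ren π A) (ren π B) = ren π (A ∪ B)
  act_def : ∀ π f, act π f =
      comp (ren π.symm ((dom f).image π)) (comp f (ren π (cod f)))
  act_id : ∀ π A, act π (id A) = id (A.image π)
  act_comp : ∀ π f g, cod f = dom g → act π (comp f g) = comp (act π f) (act π g)
  act_tens : ∀ π f g, dom f ∩ dom g = ∅ → cod f ∩ cod g = ∅ →
      act π (tens f g) = tens (act π f) (act π g)

/-- A morphism of nominal PROPs: an identity-on-objects strict monoidal equivariant functor. -/
structure NPROPMor (T U : NPROP) where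
  f : T.Arr → U.Arr
  map_dom : ∀ x, U.dom (f x) = T.dom x
  map_cod : ∀ x, U.cod (f x) = T.cod x
  map_id : ∀ A, f (T.id A) = U.id A
  map_comp : ∀ x y, T.cod x = T.dom y → f (T.comp x y) = U.comp (f x) (f y)
  map_tens : ∀ x y, T.dom x ∩ T.dom y = ∅ → T.cod x ∩ T.cod y = ∅ →
      f (T.tens x y) = U.tens (f x) (f y)
  map_ren : ∀ π A, f (T.ren π A) = U.ren π A
  map_act : ∀ π x, f (T.act π x) = U.act π (f x)

/-- Terms of the nominal PROP `NOM(S)` presented by generators `[a⟩ f ⟨b]` (`box a f b`) for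
arrows `f : n → m` of the PROP `S` and lists `a`, `b` of distinct names of lengths `n`, `m`,
together with identities `id_A`, renamings `[a|b] = ⊎ δ_{aᵢbᵢ}` (`rn a b`), composition and
tensor. -/
inductive NTm (S : PROP) : Type
  | box : List Name → S.Arr → List Name → NTm S
  | rn : List Name → List Name → NTm S
  | idA : Finset Name → NTm S
  | comp : NTm S → NTm S → NTm S
  | tens : NTm S → NTm S → NTm S

/-- Domain (a finite set of names) of a term of `NOM(S)`. -/
def ntdom {S : PROP} : NTm S → Finset Name
  | .box a _ _ => a.toFinset
  | .rn a _ => a.toFinset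
  | .idA A => A
  | .comp x _ => ntdom x
  | .tens x y => ntdom x ∪ ntdom y

/-- Codomain of a term of `NOM(S)`. -/
def ntcod {S : PROP} : NTm S → Finset Name
  | .box _ _ b => b.toFinset
  | .rn _ b => b.toFinset
  | .idA A => A
  | .comp _ y => ntcod y
  | .tens x y => ntcod x ∪ ntcod y

/-- The permutation action on terms of `NOM(S)`. -/
def nact {S : PROP} (π : Equiv.Perm Name) : NTm S → NTm S
  | .box a f b => .box (a.map π) f (b.map π)
  | .rn a b => .rn (a.map π) (b.map π)
  | .idA A => .idA (A.image π)
  | .comp x y => .comp (nact π x) (nact π y)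
  | .tens x y => .tens (nact π x) (nact π y)

/-- The equations presenting the nominal PROP `NOM(S)`: the laws of an internal strict
monoidal category (with a commutative partial tensor), the renaming laws, and the five
defining equations of `NOM`. -/
inductive NRel (S : PROP) : NTm S → NTm S → Prop
  | refl (x : NTm S) : NRel S x x
  | symm {x y : NTm S} : NRel S x y → NRel S y x
  | trans {x y z : NTm S} : NRel S x y → NRel S y z → NRel S x z
  | comp_congr {x x' y y' : NTm S} : NRel S x x' → NRel S y y' →
      NRel S (.comp x y) (.comp x' y')
  | tens_congr {x x' y y' : NTm S} : NRel S x x' → NRel S y y' →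
      NRel S (.tens x y) (.tens x' y')
  | act_congr (π : Equiv.Perm Name) {x y : NTm S} : NRel S x y →
      NRel S (nact π x) (nact π y)
  | id_comp (x : NTm S) : NRel S (.comp (.idA (ntdom x)) x) x
  | comp_id (x : NTm S) : NRel S (.comp x (.idA (ntcod x))) x
  | comp_assoc (x y z : NTm S) : NRel S (.comp (.comp x y) z) (.comp x (.comp y z))
  | id_tens_empty (x : NTm S) : NRel S (.tens (.idA ∅) x) x
  | tens_id_empty (x : NTm S) : NRel S (.tens x (.idA ∅)) x
  | tens_assoc (x y z : NTm S) : NRel S (.tens (.tens x y) z) (.tens x (.tens y z))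
  | tens_comm (x y : NTm S) : NRel S (.tens x y) (.tens y x)
  | tens_id (A B : Finset Name) : A ∩ B = ∅ →
      NRel S (.tens (.idA A) (.idA B)) (.idA (A ∪ B))
  | interchange (x y x' y' : NTm S) :
      ntcod x = ntdom y → ntcod x' = ntdom y' →
      NRel S (.tens (.comp x y) (.comp x' y')) (.comp (.tens x x') (.tens y y'))
  | rn_id (a : List Name) : NRel S (.rn a a) (.idA a.toFinset)
  | rn_comp (a b c : List Name) : b.Nodup → a.length = b.length →
      b.length = c.length → NRel S (.comp (.rn a b) (.rn b c)) (.rn a c)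
  | rn_tens (a b a' b' : List Name) :
      NRel S (.tens (.rn a b) (.rn a' b')) (.rn (a ++ a') (b ++ b'))
  -- the five defining equations of NOM(S):
  | nom_comp (a b c : List Name) (f g : S.Arr) :
      a.Nodup → b.Nodup → c.Nodup →
      a.length = S.dom f → b.length = S.cod f →
      b.length = S.dom g → c.length = S.cod g →
      NRel S (.box a (S.comp f g) c) (.comp (.box a f b) (.box b g c))
  | nom_tens (af bf ag bg : List Name) (f g : S.Arr) :
      (af ++ ag).Nodup → (bf ++ bg).Nodup →
      af.length = S.dom f → bf.length = S.cod f →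
      ag.length = S.dom g → bg.length = S.cod g →
      NRel S (.box (af ++ ag) (S.tens f g) (bf ++ bg))
             (.tens (.box af f bf) (.box ag g bg))
  | nom_id (a b : List Name) (n : ℕ) : a.Nodup → b.Nodup →
      a.length = n → b.length = n →
      NRel S (.box a (S.id n) b) (.rn a b)
  | nom_prm_left (a b b' c : List Name) (n : ℕ) (e : Equiv.Perm (Fin n)) (f : S.Arr)
      (hb : b.length = n) (hb' : b'.length = n) :
      a.Nodup → b.Nodup → b'.Nodup → c.Nodup →
      a.length = n → b.toFinset = b'.toFinset →
      (∀ i : Fin n, b.get (i.cast hb.symm) = b'.get ((e i).cast hb'.symm)) →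
      n = S.dom f → c.length = S.cod f →
      NRel S (.box a (S.comp (S.prm n e) f) c)
             (.comp (.rn a b) (.box b' f c))
  | nom_prm_right (a b b' c : List Name) (n : ℕ) (e : Equiv.Perm (Fin n)) (f : S.Arr)
      (hb : b.length = n) (hb' : b'.length = n) :
      a.Nodup → b.Nodup → b'.Nodup → c.Nodup →
      a.length = S.dom f → n = S.cod f → c.length = n →
      b.toFinset = b'.toFinset →
      (∀ i : Fin n, b.get (i.cast hb.symm) = b'.get ((e i).cast hb'.symm)) →
      NRel S (.box a (S.comp f (S.prm n e)) c)
             (.comp (.box a f b) (.rn b' c))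

/-!
The two defining equations for symmetries let a block symmetry `σ` at either end of a generator
be traded for swapping the corresponding blocks of names. This turns the two sides into
`[a^m + a^z⟩ t ⊕ id_z ⟨b^n + b^z]` and `[a^z + a^m⟩ id_z ⊕ t ⟨b^z + b^n]`, which the tensor
equation splits into `[a^m⟩ t ⟨b^n] ⊎ [a^z⟩ id_z ⟨b^z]` taken in the two orders; these agree by
commutativity of `⊎`.
-/

lemma blockSwap_val (p q : ℕ) (i : Fin (p + q)) :
    (blockSwap p q i : ℕ) = if (i : ℕ) < p then q + i else (i : ℕ) - p := by
  rcases i with ⟨i, hi⟩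
  by_cases h : i < p
  · simp [blockSwap, finAddFlip_apply_mk_left h, h]
  · simp [blockSwap, finAddFlip_apply_mk_right (Nat.le_of_not_lt h) hi, h]

lemma List.get_append_eq_get_append_blockSwap {α : Type*} {u v : List α} {p q : ℕ}
    (hu : u.length = p) (hv : v.length = q) (huv : (u ++ v).length = p + q)
    (hvu : (v ++ u).length = p + q) (i : Fin (p + q)) :
    (u ++ v).get (i.cast huv.symm) = (v ++ u).get ((blockSwap p q i).cast hvu.symm) := by
  simp only [List.get_eq_getElem, Fin.val_cast, blockSwap_val]
  split_ifs with h
  · rw [List.getElem_append_left (by omega), List.getElem_append_right (by omega)]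
    congr 1; omega
  · rw [List.getElem_append_right (by omega), List.getElem_append_left (by omega)]
    congr 1; omega

namespace NRel

variable {S : PROP}

instance : Trans (NRel S) (NRel S) (NRel S) := ⟨NRel.trans⟩

lemma comp_rn_self (x : NTm S) (b : List Name) (hb : ntcod x = b.toFinset) :
    NRel S (.comp x (.rn b b)) x :=
  (comp_congr (refl x) (rn_id b)).trans (hb ▸ comp_id x)

lemma rn_self_comp (x : NTm S) (a : List Name) (ha : ntdom x = a.toFinset) :
    NRel S (.comp (.rn a a) x) x :=
  (comp_congr (rn_id a) (refl x)).trans (ha ▸ id_comp x)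

lemma box_comp_sym {a u v : List Name} {f : S.Arr} {p q : ℕ}
    (ha : a.Nodup) (huv : (u ++ v).Nodup) (hu : u.length = p) (hv : v.length = q)
    (hdom : a.length = S.dom f) (hcod : S.cod f = p + q) :
    NRel S (.box a (S.comp f (S.sym p q)) (v ++ u)) (.box a f (u ++ v)) := by
  have hvu : (v ++ u).Nodup := List.perm_append_comm.nodup huv
  have hluv : (u ++ v).length = p + q := by simp [hu, hv]
  have hlvu : (v ++ u).length = p + q := by simp [hu, hv]; omega
  calc NRel S _ (.comp (.box a f (u ++ v)) (.rn (v ++ u) (v ++ u))) :=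
        nom_prm_right a (u ++ v) (v ++ u) (v ++ u) (p + q) (blockSwap p q) f hluv hlvu
          ha huv hvu hvu hdom hcod.symm hlvu (by simp [Finset.union_comm])
          (List.get_append_eq_get_append_blockSwap hu hv hluv hlvu)
    NRel S _ _ := comp_rn_self _ _ (by simp [ntcod, Finset.union_comm])

lemma box_sym_comp {u v c : List Name} {f : S.Arr} {p q : ℕ}
    (huv : (u ++ v).Nodup) (hc : c.Nodup) (hu : u.length = p) (hv : v.length = q)
    (hdom : S.dom f = p + q) (hcod : c.length = S.cod f) :
    NRel S (.box (u ++ v) (S.comp (S.sym p q) f) c) (.box (v ++ u) f c) := by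
  have hvu : (v ++ u).Nodup := List.perm_append_comm.nodup huv
  have hluv : (u ++ v).length = p + q := by simp [hu, hv]
  have hlvu : (v ++ u).length = p + q := by simp [hu, hv]; omega
  calc NRel S _ (.comp (.rn (u ++ v) (u ++ v)) (.box (v ++ u) f c)) :=
        nom_prm_left (u ++ v) (u ++ v) (v ++ u) c (p + q) (blockSwap p q) f hluv hlvu
          huv huv hvu hc hluv (by simp [Finset.union_comm])
          (List.get_append_eq_get_append_blockSwap hu hv hluv hlvu) hdom.symm hcod
    NRel S _ _ := rn_self_comp _ _ (by simp [ntdom, Finset.union_comm])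

lemma box_tens_comm {a a' b b' : List Name} {f g : S.Arr}
    (ha : (a ++ a').Nodup) (hb : (b ++ b').Nodup)
    (hfd : a.length = S.dom f) (hfc : b.length = S.cod f)
    (hgd : a'.length = S.dom g) (hgc : b'.length = S.cod g) :
    NRel S (.box (a ++ a') (S.tens f g) (b ++ b')) (.box (a' ++ a) (S.tens g f) (b' ++ b)) :=
  calc NRel S _ (.tens (.box a f b) (.box a' g b')) :=
        nom_tens a b a' b' f g ha hb hfd hfc hgd hgc
    NRel S _ (.tens (.box a' g b') (.box a f b)) := tens_comm _ _
    NRel S _ _ := (nom_tens a' b' a b g f (List.perm_append_comm.nodup ha)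
        (List.perm_append_comm.nodup hb) hgd hgc hfd hfc).symm

end NRel

/-- in `NOM(S)`, commutativity of `⊎` together with the defining equations
implies that naturality of symmetries in `S` is respected: for `t : m → n` in `S` and any
`z`, `[a^m + a^z⟩ (t ⊕ id_z);σ_{n,z} ⟨b^z + b^n] = [a^m + a^z⟩ σ_{m,z};(id_z ⊕ t) ⟨b^z + b^n]`
holds in `NOM(S)`. -/
theorem stmt14 (S : PROP) (t : S.Arr) (m n z : ℕ) (hd : S.dom t = m) (hc : S.cod t = n)
    (am az bz bn : List Name)
    (h1 : am.length = m) (h2 : az.length = z) (h3 : bz.length = z) (h4 : bn.length = n)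
    (hnd1 : (am ++ az).Nodup) (hnd2 : (bz ++ bn).Nodup) :
    NRel S
      (.box (am ++ az) (S.comp (S.tens t (S.id z)) (S.sym n z)) (bz ++ bn))
      (.box (am ++ az) (S.comp (S.sym m z) (S.tens (S.id z) t)) (bz ++ bn)) := by
  have hnd2' : (bn ++ bz).Nodup := List.perm_append_comm.nodup hnd2
  have hidd : az.length = S.dom (S.id z) := by rw [S.dom_id, h2]
  have hidc : bz.length = S.cod (S.id z) := by rw [S.cod_id, h3]
  calc NRel S _ (.box (am ++ az) (S.tens t (S.id z)) (bn ++ bz)) :=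
        NRel.box_comp_sym hnd1 hnd2' h4 h3 (by simp [S.dom_tens, S.dom_id, hd, h1, h2])
          (by rw [S.cod_tens, S.cod_id, hc])
    NRel S _ (.box (az ++ am) (S.tens (S.id z) t) (bz ++ bn)) :=
        NRel.box_tens_comm hnd1 hnd2' (h1.trans hd.symm) (h4.trans hc.symm) hidd hidc
    NRel S _ _ := (NRel.box_sym_comp hnd1 hnd2 h1 h2 (by rw [S.dom_tens, S.dom_id, hd]; omega)
        (by simp [S.cod_tens, S.cod_id, hc, h3, h4])).symm
end
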